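/- Consider offline alignment with finite context set X, finite action set A, context distribution ρ with ρ(x) > 0, reference policy πref with πref(a|x) > 0 for all x, a, true reward r* : X×A → [0, Rmax] with Rmax ≥ 1, parameters β > 0 and γ ∈ (0, 1], and a finite nonempty policy class Π each of whose members π satisfies π(a|x) > 0 for all x, a. Assume there exist π_{β,γ} ∈ Π and Z : X → ℝ such that r*(x,a) = β·φ_γ(π_{β,γ}(a|x)/πref(a|x)) + Z(x) for all x, a, where φ_γ(z) = z + γ·log z. Let D be a preference dataset of n i.i.d. Bradley–Terry samples, let π̂ be any maximizer over Π of Σ_{(x,a₊,a₋)∈D} log σ( clip_{2Rmax}[ β·φ_γ(π(a₊|x)/πref(a₊|x)) − β·φ_γ(π(a₋|x)/πref(a₋|x)) ] ), and define the implicit reward r̂(x,a) := β·φ_γ(π̂(a|x)/πref(a|x)). Then for every δ ∈ (0,1), with probability at least 1 − δ, Σ_x ρ(x) Σ_{a,b} πref(a|x)·πref(b|x)·( clip_{2Rmax}[r̂(x,a) − r̂(x,b)] − clip_{2Rmax}[r*(x,a) − r*(x,b)] )² ≤ 128·Rmax²·e^{4Rmax}·log(|Π|/δ)/n. -/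

import Mathlib

open scoped Classical

/-- The sigmoid function `σ(u) = e^u / (1 + e^u)`. -/
noncomputable def sigmoid (u : ℝ) : ℝ := Real.exp u / (1 + Real.exp u)

/-- Clipping to the interval `[-R, R]`. -/
noncomputable def clip (R z : ℝ) : ℝ := max (-R) (min R z)

/-- The mixed χ²-regularization link function `φ_γ(z) = z + γ·log z`. -/
noncomputable def phiGamma (γ z : ℝ) : ℝ := z + γ * Real.log z

/-- Probability of observing the Bradley–Terry preference sample `(x, a₊, a₋)`. -/
noncomputable def BTweight {X A : Type*}
    (ρ : X → ℝ) (pref : X → A → ℝ) (rstar : X → A → ℝ) (s : X × A × A) : ℝ :=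
  2 * ρ s.1 * pref s.1 s.2.1 * pref s.1 s.2.2 *
    sigmoid (rstar s.1 s.2.1 - rstar s.1 s.2.2)

/-- The χPO objective with link `φ_γ` on a dataset `D` of preference samples. -/
noncomputable def chiPOobj {X A : Type*} {n : ℕ}
    (pref : X → A → ℝ) (β γ Rmax : ℝ) (pol : X → A → ℝ)
    (D : Fin n → X × A × A) : ℝ :=
  ∑ i, Real.log (sigmoid (clip (2 * Rmax)
    (β * phiGamma γ (pol (D i).1 (D i).2.1 / pref (D i).1 (D i).2.1)
      - β * phiGamma γ (pol (D i).1 (D i).2.2 / pref (D i).1 (D i).2.2))))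

/-- implicit clipped reward difference -/
noncomputable def Faux {X A : Type*} (pref : X → A → ℝ) (β γ Rmax : ℝ)
    (p : X → A → ℝ) (s : X × A × A) : ℝ :=
  clip (2 * Rmax) (β * phiGamma γ (p s.1 s.2.1 / pref s.1 s.2.1)
    - β * phiGamma γ (p s.1 s.2.2 / pref s.1 s.2.2))

/-- model distribution over preference samples induced by policy `p` -/
noncomputable def Qaux {X A : Type*} (ρ : X → ℝ) (pref : X → A → ℝ) (β γ Rmax : ℝ)
    (p : X → A → ℝ) (s : X × A × A) : ℝ :=
  2 * ρ s.1 * pref s.1 s.2.1 * pref s.1 s.2.2 * sigmoid (Faux pref β γ Rmax p s)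

lemma one_add_exp_pos (u : ℝ) : 0 < 1 + Real.exp u := by positivity

lemma sigmoid_pos (u : ℝ) : 0 < sigmoid u := by
  unfold sigmoid; positivity

lemma sigmoid_le_one (u : ℝ) : sigmoid u ≤ 1 := by
  unfold sigmoid
  rw [div_le_one (one_add_exp_pos u)]; linarith

lemma sigmoid_add_neg (u : ℝ) : sigmoid u + sigmoid (-u) = 1 := by
  unfold sigmoid
  have h1 := (Real.exp_pos u).ne'
  have h2 := (one_add_exp_pos u).ne'
  have h3 := (one_add_exp_pos (-u)).ne'
  field_simp
  rw [Real.exp_neg]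
  field_simp
  ring

lemma clip_neg (R z : ℝ) (hR : 0 ≤ R) : clip R (-z) = - clip R z := by
  unfold clip
  rcases le_total z R with h | h <;> rcases le_total z (-R) with h' | h' <;>
    simp [max_def, min_def] <;> split_ifs <;> linarith

lemma clip_eq_self (R z : ℝ) (h1 : -R ≤ z) (h2 : z ≤ R) : clip R z = z := by
  unfold clip
  rw [min_eq_right h2, max_eq_right h1]

lemma clip_mem (R z : ℝ) (hR : 0 ≤ R) : -R ≤ clip R z ∧ clip R z ≤ R := by
  unfold clip
  constructor
  · exact le_max_left _ _
  · exact max_le (by linarith) (min_le_left _ _)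

lemma sigmoid_hasDerivAt (u : ℝ) :
    HasDerivAt sigmoid (Real.exp u / (1 + Real.exp u) ^ 2) u := by
  have h : HasDerivAt (fun u => Real.exp u / (1 + Real.exp u))
      ((Real.exp u * (1 + Real.exp u) - Real.exp u * Real.exp u) / (1 + Real.exp u) ^ 2) u := by
    have hden : HasDerivAt (fun u : ℝ => 1 + Real.exp u) (Real.exp u) u := by
      exact (Real.hasDerivAt_exp u).const_add 1
    exact (Real.hasDerivAt_exp u).div hden (one_add_exp_pos u).ne'
  show HasDerivAt (fun u => Real.exp u / (1 + Real.exp u)) _ u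
  convert h using 1
  ring

/-- Lower bound on sigmoid differences on `[-R, R]`. -/
lemma sigmoid_diff_lb (R u v : ℝ) (hR : 0 ≤ R) (hv : -R ≤ v) (huv : v ≤ u) (hu : u ≤ R) :
    u - v ≤ 4 * Real.exp R * (sigmoid u - sigmoid v) := by
  rcases eq_or_lt_of_le huv with rfl | hlt
  · simp
  obtain ⟨ξ, hξ, hslope⟩ := exists_hasDerivAt_eq_slope sigmoid
      (fun z => Real.exp z / (1 + Real.exp z) ^ 2) hlt
      (fun z _ => (sigmoid_hasDerivAt z).continuousAt.continuousWithinAt)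
      (fun z _ => sigmoid_hasDerivAt z)
  have hξ1 : -R ≤ ξ := le_trans hv (le_of_lt hξ.1)
  have hξ2 : ξ ≤ R := le_trans (le_of_lt hξ.2) hu
  -- σ'(ξ) ≥ 1/(4 e^R)
  have hkey : (1 + Real.exp ξ) ^ 2 ≤ 4 * Real.exp (ξ + R) := by
    have e1 : (1:ℝ) ≤ Real.exp (ξ + R) := Real.one_le_exp (by linarith)
    have e2 : Real.exp ξ ≤ Real.exp (ξ + R) := Real.exp_le_exp.2 (by linarith)
    have e3 : Real.exp ξ * Real.exp ξ ≤ Real.exp ξ * Real.exp R := by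
      have := Real.exp_le_exp.2 hξ2
      nlinarith [Real.exp_pos ξ]
    rw [Real.exp_add] at *
    nlinarith
  have hd : 1 / (4 * Real.exp R) ≤ Real.exp ξ / (1 + Real.exp ξ) ^ 2 := by
    rw [div_le_div_iff₀ (by positivity) (by positivity)]
    calc 1 * (1 + Real.exp ξ) ^ 2 = (1 + Real.exp ξ) ^ 2 := one_mul _
    _ ≤ 4 * Real.exp (ξ + R) := hkey
    _ = Real.exp ξ * (4 * Real.exp R) := by rw [Real.exp_add]; ring
  have hslope' : sigmoid u - sigmoid v = (Real.exp ξ / (1 + Real.exp ξ) ^ 2) * (u - v) := by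
    rw [hslope, div_mul_eq_mul_div, mul_div_assoc, div_self (by linarith : u - v ≠ 0), mul_one]
  rw [hslope']
  have h4 : (0:ℝ) < 4 * Real.exp R := by positivity
  have := mul_le_mul_of_nonneg_right hd (by linarith : (0:ℝ) ≤ u - v)
  calc u - v = (4 * Real.exp R) * ((1 / (4 * Real.exp R)) * (u - v)) := by field_simp
  _ ≤ (4 * Real.exp R) * ((Real.exp ξ / (1 + Real.exp ξ) ^ 2) * (u - v)) := by
      apply mul_le_mul_of_nonneg_left _ (le_of_lt h4)
      exact this
  _ = _ := by ring

lemma sq_diff_le_sq_sqrt_diff (a b : ℝ) (ha0 : 0 ≤ a) (ha1 : a ≤ 1) (hb0 : 0 ≤ b) (hb1 : b ≤ 1) :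
    (a - b) ^ 2 ≤ 4 * (Real.sqrt a - Real.sqrt b) ^ 2 := by
  have h1 : Real.sqrt a ≤ 1 := by
    rw [show (1:ℝ) = Real.sqrt 1 by simp]; exact Real.sqrt_le_sqrt ha1
  have h2 : Real.sqrt b ≤ 1 := by
    rw [show (1:ℝ) = Real.sqrt 1 by simp]; exact Real.sqrt_le_sqrt hb1
  have ha : Real.sqrt a ^ 2 = a := Real.sq_sqrt ha0
  have hb : Real.sqrt b ^ 2 = b := Real.sq_sqrt hb0
  have hsa : 0 ≤ Real.sqrt a := Real.sqrt_nonneg a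
  have hsb : 0 ≤ Real.sqrt b := Real.sqrt_nonneg b
  have key : (a - b) ^ 2 = (Real.sqrt a - Real.sqrt b) ^ 2 * (Real.sqrt a + Real.sqrt b) ^ 2 := by
    rw [← mul_pow]; rw [show (Real.sqrt a - Real.sqrt b) * (Real.sqrt a + Real.sqrt b)
      = Real.sqrt a ^ 2 - Real.sqrt b ^ 2 by ring, ha, hb]
  rw [key]
  nlinarith [sq_nonneg (Real.sqrt a - Real.sqrt b)]

lemma prod_sqrt {ι : Type*} (s : Finset ι) (f : ι → ℝ) (hf : ∀ i ∈ s, 0 ≤ f i) :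
    ∏ i ∈ s, Real.sqrt (f i) = Real.sqrt (∏ i ∈ s, f i) := by
  induction s using Finset.cons_induction with
  | empty => simp
  | cons a s ha ih =>
    rw [Finset.prod_cons, Finset.prod_cons, ih (fun i hi => hf i (Finset.mem_cons.2 (Or.inr hi))),
      ← Real.sqrt_mul (hf a (Finset.mem_cons_self a s))]

lemma sum_sigmoid_pair {A : Type*} [Fintype A] (p : A → ℝ) (hp : ∑ a, p a = 1)
    (g : A → A → ℝ) (hg : ∀ a b, g b a = - g a b) :
    ∑ a, ∑ b, p a * p b * sigmoid (g a b) = 1 / 2 := by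
  have key : ∀ a b, p a * p b * sigmoid (g a b) + p b * p a * sigmoid (g b a) = p a * p b := by
    intro a b
    have h := sigmoid_add_neg (g a b)
    rw [hg a b]
    linear_combination p a * p b * h
  have h2 : ∑ a, ∑ b, (p a * p b * sigmoid (g a b) + p b * p a * sigmoid (g b a)) = 1 := by
    simp only [key]
    rw [← Finset.sum_mul_sum, hp, one_mul]
  have h3 : (∑ a, ∑ b, p b * p a * sigmoid (g b a)) = ∑ a, ∑ b, p a * p b * sigmoid (g a b) :=
    Finset.sum_comm
  simp only [Finset.sum_add_distrib] at h2
  rw [h3] at h2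
  linarith



set_option maxHeartbeats 1000000 in
/-- Off-policy estimation guarantee for the implicit reward model of χPO (Lemma D.1):
with probability at least `1 - δ` over `n` Bradley–Terry samples, the clipped implicit
reward differences of any maximizer of the χPO objective are accurate under `πref`. -/
theorem chiPO_implicit_reward_estimation
    {X A : Type*} [Fintype X] [Fintype A] [Nonempty X] [Nonempty A]
    (ρ : X → ℝ) (hρ : ∀ x, 0 < ρ x) (hρsum : ∑ x, ρ x = 1)
    (pref : X → A → ℝ) (hpref : ∀ x a, 0 < pref x a)
    (hprefsum : ∀ x, ∑ a, pref x a = 1)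
    (Rmax : ℝ) (hRmax : 1 ≤ Rmax)
    (rstar : X → A → ℝ) (hrstar : ∀ x a, rstar x a ∈ Set.Icc (0 : ℝ) Rmax)
    (β γ : ℝ) (hβ : 0 < β) (hγ0 : 0 < γ) (hγ1 : γ ≤ 1)
    (Pol : Finset (X → A → ℝ)) (hPolne : Pol.Nonempty)
    (hPolvalid : ∀ p ∈ Pol, (∀ x a, 0 < p x a) ∧ ∀ x, ∑ a, p x a = 1)
    (pβγ : X → A → ℝ) (hpβγmem : pβγ ∈ Pol) (Z : X → ℝ)
    (hreal : ∀ x a, rstar x a = β * phiGamma γ (pβγ x a / pref x a) + Z x)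
    (n : ℕ) (hn : 0 < n)
    (δ : ℝ) (hδ : δ ∈ Set.Ioo (0 : ℝ) 1) :
    1 - δ ≤ ∑ D : Fin n → X × A × A,
      if (∀ phat ∈ Pol,
            (∀ p ∈ Pol, chiPOobj pref β γ Rmax p D ≤ chiPOobj pref β γ Rmax phat D) →
            ∑ x, ρ x * ∑ a, ∑ b, pref x a * pref x b *
                (clip (2 * Rmax)
                    (β * phiGamma γ (phat x a / pref x a)
                      - β * phiGamma γ (phat x b / pref x b)) -
                  clip (2 * Rmax) (rstar x a - rstar x b)) ^ 2 ≤
              128 * Rmax ^ 2 * Real.exp (4 * Rmax) *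
                Real.log ((Pol.card : ℝ) / δ) / (n : ℝ))
      then ∏ i, BTweight ρ pref rstar (D i) else 0 := by
  classical
  obtain ⟨hδ0, hδ1⟩ := hδ
  have hRpos : (0:ℝ) < Rmax := lt_of_lt_of_le one_pos hRmax
  have hR2 : (0:ℝ) ≤ 2 * Rmax := by linarith
  set w : X × A × A → ℝ := BTweight ρ pref rstar with hwdef
  -- positivity of base weights
  have hbpos : ∀ s : X × A × A, 0 < 2 * ρ s.1 * pref s.1 s.2.1 * pref s.1 s.2.2 :=
    fun s => mul_pos (mul_pos (mul_pos (by norm_num : (0:ℝ) < 2) (hρ s.1)) (hpref _ _)) (hpref _ _)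
  -- antisymmetry of Faux
  have hFanti : ∀ (p : X → A → ℝ) (x : X) (a b : A),
      Faux pref β γ Rmax p (x, b, a) = - Faux pref β γ Rmax p (x, a, b) := by
    intro p x a b
    show clip _ _ = - clip _ _
    rw [← clip_neg _ _ hR2, neg_sub]
  -- Faux at true policy
  have hFstar : ∀ (x : X) (a b : A),
      Faux pref β γ Rmax pβγ (x, a, b) = clip (2 * Rmax) (rstar x a - rstar x b) := by
    intro x a b
    show clip _ _ = _
    congr 1
    have h1 := hreal x a
    have h2 := hreal x b
    linarith
  have hclipstar : ∀ (x : X) (a b : A),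
      clip (2 * Rmax) (rstar x a - rstar x b) = rstar x a - rstar x b := by
    intro x a b
    have h1 := hrstar x a
    have h2 := hrstar x b
    simp only [Set.mem_Icc] at h1 h2
    exact clip_eq_self _ _ (by linarith) (by linarith)
  -- w = Q pβγ
  have hwQ : ∀ s : X × A × A, w s = Qaux ρ pref β γ Rmax pβγ s := by
    rintro ⟨x, a, b⟩
    show 2 * ρ x * pref x a * pref x b * sigmoid (rstar x a - rstar x b)
      = 2 * ρ x * pref x a * pref x b * sigmoid (Faux pref β γ Rmax pβγ (x, a, b))
    rw [hFstar, hclipstar]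
  have hQpos : ∀ (p : X → A → ℝ) (s : X × A × A), 0 < Qaux ρ pref β γ Rmax p s :=
    fun p s => mul_pos (hbpos s) (sigmoid_pos _)
  have hwpos : ∀ s : X × A × A, 0 < w s := by
    intro s; rw [hwQ s]; exact hQpos _ s
  -- total mass one
  have hQsum : ∀ p : X → A → ℝ, ∑ s : X × A × A, Qaux ρ pref β γ Rmax p s = 1 := by
    intro p
    rw [Fintype.sum_prod_type]
    have hx : ∀ x : X, ∑ q : A × A, Qaux ρ pref β γ Rmax p (x, q) = ρ x := by
      intro x
      rw [Fintype.sum_prod_type]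
      have hpair := sum_sigmoid_pair (pref x) (hprefsum x)
        (fun a b => Faux pref β γ Rmax p (x, a, b)) (fun a b => hFanti p x a b)
      calc ∑ a, ∑ b, Qaux ρ pref β γ Rmax p (x, a, b)
          = ∑ a, ∑ b, (2 * ρ x) *
            (pref x a * pref x b * sigmoid (Faux pref β γ Rmax p (x, a, b))) := by
            refine Finset.sum_congr rfl fun a _ => Finset.sum_congr rfl fun b _ => ?_
            show 2 * ρ x * pref x a * pref x b * sigmoid _ = _
            ring
        _ = (2 * ρ x) * ∑ a, ∑ b,
            pref x a * pref x b * sigmoid (Faux pref β γ Rmax p (x, a, b)) := by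
            simp only [← Finset.mul_sum]
        _ = ρ x := by rw [hpair]; ring
    rw [Finset.sum_congr rfl fun x _ => hx x, hρsum]
  have hwsum : ∑ s : X × A × A, w s = 1 := by
    rw [show (∑ s : X × A × A, w s) = ∑ s : X × A × A, Qaux ρ pref β γ Rmax pβγ s from
      Finset.sum_congr rfl fun s _ => hwQ s]
    exact hQsum pβγ
  -- Bhattacharyya coefficient
  set c : (X → A → ℝ) → ℝ :=
    fun p => ∑ s : X × A × A, Real.sqrt (w s * Qaux ρ pref β γ Rmax p s) with hcdef
  have hcpos : ∀ p, 0 < c p := by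
    intro p
    refine Finset.sum_pos (fun s _ => Real.sqrt_pos.2 (mul_pos (hwpos s) (hQpos p s)))
      Finset.univ_nonempty
  have hcle : ∀ p, c p ≤ 1 := by
    intro p
    have hcs := Finset.sum_mul_sq_le_sq_mul_sq Finset.univ
      (fun s : X × A × A => Real.sqrt (w s))
      (fun s : X × A × A => Real.sqrt (Qaux ρ pref β γ Rmax p s))
    have h1 : ∀ s : X × A × A, Real.sqrt (w s) * Real.sqrt (Qaux ρ pref β γ Rmax p s)
        = Real.sqrt (w s * Qaux ρ pref β γ Rmax p s) :=
      fun s => (Real.sqrt_mul (le_of_lt (hwpos s)) _).symm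
    have h2 : ∀ s : X × A × A, Real.sqrt (w s) ^ 2 = w s :=
      fun s => Real.sq_sqrt (le_of_lt (hwpos s))
    have h3 : ∀ s : X × A × A, Real.sqrt (Qaux ρ pref β γ Rmax p s) ^ 2
        = Qaux ρ pref β γ Rmax p s := fun s => Real.sq_sqrt (le_of_lt (hQpos p s))
    simp only [h1, h2, h3, hwsum, hQsum p, one_mul] at hcs
    have hcp := hcpos p
    rw [hcdef] at *
    nlinarith [hcs]
  
  -- likelihood-ratio statistic
  set G : (X → A → ℝ) → (Fin n → X × A × A) → ℝ :=
    fun p D => ∏ i, Real.sqrt (Qaux ρ pref β γ Rmax p (D i) / w (D i)) with hGdef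
  have hGnn : ∀ p D, 0 ≤ G p D :=
    fun p D => Finset.prod_nonneg fun i _ => Real.sqrt_nonneg _
  have hEG : ∀ p : X → A → ℝ,
      ∑ D : Fin n → X × A × A, (∏ i, w (D i)) * G p D = (c p) ^ n := by
    intro p
    have hpt : ∀ s : X × A × A,
        w s * Real.sqrt (Qaux ρ pref β γ Rmax p s / w s)
          = Real.sqrt (w s * Qaux ρ pref β γ Rmax p s) := by
      intro s
      rw [Real.sqrt_div (le_of_lt (hQpos p s)), Real.sqrt_mul (le_of_lt (hwpos s))]
      have hsw : Real.sqrt (w s) ≠ 0 := ne_of_gt (Real.sqrt_pos.2 (hwpos s))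
      rw [← Real.mul_self_sqrt (le_of_lt (hwpos s))]
      field_simp
      rw [Real.sq_sqrt (sq_nonneg _)]; ring
    calc ∑ D : Fin n → X × A × A, (∏ i, w (D i)) * G p D
        = ∑ D : Fin n → X × A × A,
          ∏ i, (w (D i) * Real.sqrt (Qaux ρ pref β γ Rmax p (D i) / w (D i))) := by
          refine Finset.sum_congr rfl fun D _ => ?_
          rw [hGdef, ← Finset.prod_mul_distrib]
      _ = ∑ D : Fin n → X × A × A,
          ∏ i, Real.sqrt (w (D i) * Qaux ρ pref β γ Rmax p (D i)) := by
          simp only [hpt]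
      _ = (∑ s : X × A × A, Real.sqrt (w s * Qaux ρ pref β γ Rmax p s)) ^ n := by
          rw [Fintype.sum_pow]
      _ = (c p) ^ n := by rw [hcdef]
  set N : ℝ := (Pol.card : ℝ) with hNdef
  have hN1 : (1:ℝ) ≤ N := by
    have h : 1 ≤ Pol.card := hPolne.card_pos
    rw [hNdef]
    exact_mod_cast h
  have hWnn : ∀ D : Fin n → X × A × A, 0 ≤ ∏ i, w (D i) :=
    fun D => Finset.prod_nonneg fun i _ => le_of_lt (hwpos _)
  -- Markov bound for each policy
  have hMarkov : ∀ p ∈ Pol,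
      ∑ D : Fin n → X × A × A,
        (if N / δ * (c p) ^ n < G p D then ∏ i, w (D i) else 0) ≤ δ / N := by
    intro p hp
    have ht : 0 < N / δ * (c p) ^ n := by
      have := hcpos p
      exact mul_pos (div_pos (lt_of_lt_of_le one_pos hN1) hδ0) (pow_pos this n)
    have hstep : ∀ D : Fin n → X × A × A,
        (if N / δ * (c p) ^ n < G p D then ∏ i, w (D i) else 0)
          ≤ (∏ i, w (D i)) * G p D / (N / δ * (c p) ^ n) := by
      intro D
      split_ifs with h
      · rw [le_div_iff₀ ht]
        exact mul_le_mul_of_nonneg_left (le_of_lt h) (hWnn D)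
      · exact div_nonneg (mul_nonneg (hWnn D) (hGnn p D)) (le_of_lt ht)
    calc ∑ D : Fin n → X × A × A,
          (if N / δ * (c p) ^ n < G p D then ∏ i, w (D i) else 0)
        ≤ ∑ D : Fin n → X × A × A, (∏ i, w (D i)) * G p D / (N / δ * (c p) ^ n) :=
          Finset.sum_le_sum fun D _ => hstep D
      _ = (c p) ^ n / (N / δ * (c p) ^ n) := by rw [← Finset.sum_div, hEG p]
      _ = δ / N := by
          have hc := hcpos p
          have hcn : (c p) ^ n ≠ 0 := by positivity
          field_simp
  -- good event
  set Egood : (Fin n → X × A × A) → Prop :=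
    fun D => ∀ p ∈ Pol, G p D ≤ N / δ * (c p) ^ n with hEgooddef
  have hUnion : ∑ D : Fin n → X × A × A,
      (if ¬ Egood D then ∏ i, w (D i) else 0) ≤ δ := by
    have hnn0 : ∀ (p : X → A → ℝ) (D : Fin n → X × A × A),
        0 ≤ (if N / δ * (c p) ^ n < G p D then ∏ i, w (D i) else 0) := by
      intro p D
      split_ifs
      · exact hWnn D
      · exact le_refl 0
    have hstep : ∀ D : Fin n → X × A × A,
        (if ¬ Egood D then ∏ i, w (D i) else 0)
          ≤ ∑ p ∈ Pol, (if N / δ * (c p) ^ n < G p D then ∏ i, w (D i) else 0) := by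
      intro D
      by_cases h : Egood D
      · rw [if_neg (not_not_intro h)]
        exact Finset.sum_nonneg fun p _ => hnn0 p D
      · rw [if_pos h]
        simp only [hEgooddef, not_forall, not_le, exists_prop] at h
        obtain ⟨p0, hp0, hbad⟩ := h
        have hle := Finset.single_le_sum
          (f := fun p => (if N / δ * (c p) ^ n < G p D then ∏ i, w (D i) else 0))
          (fun p _ => hnn0 p D) hp0
        rwa [if_pos hbad] at hle
    calc ∑ D : Fin n → X × A × A, (if ¬ Egood D then ∏ i, w (D i) else 0)
        ≤ ∑ D : Fin n → X × A × A, ∑ p ∈ Pol,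
            (if N / δ * (c p) ^ n < G p D then ∏ i, w (D i) else 0) :=
          Finset.sum_le_sum fun D _ => hstep D
      _ = ∑ p ∈ Pol, ∑ D : Fin n → X × A × A,
            (if N / δ * (c p) ^ n < G p D then ∏ i, w (D i) else 0) := Finset.sum_comm
      _ ≤ ∑ p ∈ Pol, δ / N := Finset.sum_le_sum hMarkov
      _ = δ := by
          have hne : (Pol.card:ℝ) ≠ 0 := (lt_of_lt_of_le one_pos hN1).ne'
          rw [Finset.sum_const, nsmul_eq_mul, hNdef]
          rw [mul_div_assoc', mul_comm, mul_div_assoc, div_self hne, mul_one]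
  have hWsum : ∑ D : Fin n → X × A × A, (∏ i, w (D i)) = 1 := by
    rw [← Fintype.sum_pow, hwsum, one_pow]
  have hA : 1 - δ ≤ ∑ D : Fin n → X × A × A,
      (if Egood D then ∏ i, w (D i) else 0) := by
    have hsplit : ∀ D : Fin n → X × A × A,
        (if Egood D then ∏ i, w (D i) else 0) + (if ¬ Egood D then ∏ i, w (D i) else 0)
          = ∏ i, w (D i) := by
      intro D
      by_cases h : Egood D
      · rw [if_pos h, if_neg (not_not_intro h), add_zero]
      · rw [if_neg h, if_pos h, zero_add]
    have := Finset.sum_congr rfl fun D (_ : D ∈ Finset.univ) => hsplit D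
    rw [Finset.sum_add_distrib] at this
    rw [hWsum] at this
    linarith [hUnion]
  -- core: good event implies the estimation bound
  have hCore : ∀ D : Fin n → X × A × A, Egood D →
      (∀ phat ∈ Pol,
        (∀ p ∈ Pol, chiPOobj pref β γ Rmax p D ≤ chiPOobj pref β γ Rmax phat D) →
        ∑ x, ρ x * ∑ a, ∑ b, pref x a * pref x b *
            (clip (2 * Rmax)
                (β * phiGamma γ (phat x a / pref x a)
                  - β * phiGamma γ (phat x b / pref x b)) -
              clip (2 * Rmax) (rstar x a - rstar x b)) ^ 2 ≤
          128 * Rmax ^ 2 * Real.exp (4 * Rmax) *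
            Real.log ((Pol.card : ℝ) / δ) / (n : ℝ)) := by
    intro D hE phat hphat hmax
    have hN0 : (0:ℝ) < N := lt_of_lt_of_le one_pos hN1
    have hnpos : (0:ℝ) < (n:ℝ) := by exact_mod_cast hn
    -- the maximizer has at least the log-likelihood of the realizable policy
    have hlogle : ∑ i, Real.log (sigmoid (Faux pref β γ Rmax pβγ (D i)))
        ≤ ∑ i, Real.log (sigmoid (Faux pref β γ Rmax phat (D i))) := hmax pβγ hpβγmem
    -- likelihood ratios
    have hratio : ∀ i : Fin n, Qaux ρ pref β γ Rmax phat (D i) / w (D i)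
        = sigmoid (Faux pref β γ Rmax phat (D i)) / sigmoid (Faux pref β γ Rmax pβγ (D i)) := by
      intro i
      rw [hwQ (D i)]
      show 2 * ρ (D i).1 * pref (D i).1 (D i).2.1 * pref (D i).1 (D i).2.2 * sigmoid _ /
        (2 * ρ (D i).1 * pref (D i).1 (D i).2.1 * pref (D i).1 (D i).2.2 * sigmoid _) = _
      rw [mul_div_mul_left _ _ (ne_of_gt (hbpos (D i)))]
    have hexpprod : ∀ p : X → A → ℝ,
        ∏ i, sigmoid (Faux pref β γ Rmax p (D i))
          = Real.exp (∑ i, Real.log (sigmoid (Faux pref β γ Rmax p (D i)))) := by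
      intro p
      rw [Real.exp_sum]
      exact Finset.prod_congr rfl fun i _ => (Real.exp_log (sigmoid_pos _)).symm
    have hprodpos : 0 < ∏ i, sigmoid (Faux pref β γ Rmax pβγ (D i)) :=
      Finset.prod_pos fun i _ => sigmoid_pos _
    have hprodle : ∏ i, sigmoid (Faux pref β γ Rmax pβγ (D i))
        ≤ ∏ i, sigmoid (Faux pref β γ Rmax phat (D i)) := by
      rw [hexpprod, hexpprod]
      exact Real.exp_le_exp.2 hlogle
    have hG1 : (1:ℝ) ≤ G phat D := by
      rw [hGdef]
      dsimp only
      rw [prod_sqrt _ _ (fun i _ => le_of_lt (div_pos (hQpos phat (D i)) (hwpos (D i)))),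
        Real.one_le_sqrt, Finset.prod_congr rfl fun i _ => hratio i, Finset.prod_div_distrib,
        le_div_iff₀ hprodpos, one_mul]
      exact hprodle
    -- information-theoretic bound on the Bhattacharyya coefficient
    have hcp1 : c phat ≤ 1 := hcle phat
    have hcppos : 0 < c phat := hcpos phat
    have h1 : (1:ℝ) ≤ N / δ * (c phat) ^ n := le_trans hG1 (hE phat hphat)
    have hcn : δ / N ≤ (c phat) ^ n := by
      have hmul := mul_le_mul_of_nonneg_left h1 (le_of_lt (div_pos hδ0 hN0))
      calc δ / N = δ / N * 1 := (mul_one _).symm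
        _ ≤ δ / N * (N / δ * (c phat) ^ n) := hmul
        _ = (c phat) ^ n := by field_simp
    have hloge : - Real.log (N / δ) ≤ (n : ℝ) * Real.log (c phat) := by
      have hl := Real.log_le_log (div_pos hδ0 hN0) hcn
      rw [Real.log_pow] at hl
      rw [show Real.log (δ / N) = - Real.log (N / δ) by
        rw [← Real.log_inv, inv_div]] at hl
      exact hl
    have h1c : 1 - c phat ≤ - Real.log (c phat) := by
      have := Real.log_le_sub_one_of_pos hcppos
      linarith
    set ε := Real.log (N / δ) / (n : ℝ) with hεdef
    have hcε : 1 - c phat ≤ ε := by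
      rw [hεdef, le_div_iff₀ hnpos]
      have h2 : (n:ℝ) * (1 - c phat) ≤ (n:ℝ) * (- Real.log (c phat)) :=
        mul_le_mul_of_nonneg_left h1c (le_of_lt hnpos)
      linarith [hloge, h2]
    have hεnn : 0 ≤ ε := by
      rw [hεdef]
      refine div_nonneg (Real.log_nonneg ?_) (le_of_lt hnpos)
      rw [le_div_iff₀ hδ0]
      linarith
    -- Hellinger distance identity
    have hH : ∑ s : X × A × A,
        (Real.sqrt (w s) - Real.sqrt (Qaux ρ pref β γ Rmax phat s)) ^ 2
          = 2 - 2 * c phat := by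
      have hpt : ∀ s : X × A × A,
          (Real.sqrt (w s) - Real.sqrt (Qaux ρ pref β γ Rmax phat s)) ^ 2
            = w s + Qaux ρ pref β γ Rmax phat s
              - 2 * Real.sqrt (w s * Qaux ρ pref β γ Rmax phat s) := by
        intro s
        rw [sub_sq, Real.sq_sqrt (le_of_lt (hwpos s)), Real.sq_sqrt (le_of_lt (hQpos phat s)),
          Real.sqrt_mul (le_of_lt (hwpos s))]
        ring
      rw [Finset.sum_congr rfl fun s _ => hpt s, Finset.sum_sub_distrib,
        Finset.sum_add_distrib, hwsum, hQsum phat, ← Finset.mul_sum]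
      have hcc : ∑ s : X × A × A, Real.sqrt (w s * Qaux ρ pref β γ Rmax phat s) = c phat := by
        rw [hcdef]
      rw [hcc]
      ring
    -- pointwise comparison of squared reward differences with Hellinger terms
    have hexp4 : Real.exp (2 * Rmax) * Real.exp (2 * Rmax) = Real.exp (4 * Rmax) := by
      rw [← Real.exp_add]
      ring_nf
    have hkey : ∀ s : X × A × A,
        (Faux pref β γ Rmax phat s - Faux pref β γ Rmax pβγ s) ^ 2
          ≤ 64 * Real.exp (4 * Rmax) *
            (Real.sqrt (sigmoid (Faux pref β γ Rmax phat s)) -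
              Real.sqrt (sigmoid (Faux pref β γ Rmax pβγ s))) ^ 2 := by
      intro s
      set u := Faux pref β γ Rmax phat s with hu
      set v := Faux pref β γ Rmax pβγ s with hv
      obtain ⟨hu1, hu2⟩ := clip_mem (2 * Rmax) (β * phiGamma γ (phat s.1 s.2.1 / pref s.1 s.2.1)
        - β * phiGamma γ (phat s.1 s.2.2 / pref s.1 s.2.2)) hR2
      obtain ⟨hv1, hv2⟩ := clip_mem (2 * Rmax) (β * phiGamma γ (pβγ s.1 s.2.1 / pref s.1 s.2.1)
        - β * phiGamma γ (pβγ s.1 s.2.2 / pref s.1 s.2.2)) hR2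
      have hu1' : -(2 * Rmax) ≤ u := hu1
      have hu2' : u ≤ 2 * Rmax := hu2
      have hv1' : -(2 * Rmax) ≤ v := hv1
      have hv2' : v ≤ 2 * Rmax := hv2
      have hstep1 : (u - v) ^ 2 ≤ 16 * Real.exp (4 * Rmax) * (sigmoid u - sigmoid v) ^ 2 := by
        rcases le_total v u with h | h
        · have hlb := sigmoid_diff_lb (2 * Rmax) u v hR2 hv1' h hu2'
          have hsq := mul_self_le_mul_self (by linarith : (0:ℝ) ≤ u - v) hlb
          calc (u - v) ^ 2 = (u - v) * (u - v) := sq (u - v)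
            _ ≤ (4 * Real.exp (2 * Rmax) * (sigmoid u - sigmoid v)) *
                (4 * Real.exp (2 * Rmax) * (sigmoid u - sigmoid v)) := hsq
            _ = 16 * (Real.exp (2 * Rmax) * Real.exp (2 * Rmax)) *
                (sigmoid u - sigmoid v) ^ 2 := by ring
            _ = 16 * Real.exp (4 * Rmax) * (sigmoid u - sigmoid v) ^ 2 := by rw [hexp4]
        · have hlb := sigmoid_diff_lb (2 * Rmax) v u hR2 hu1' h hv2'
          have hsq := mul_self_le_mul_self (by linarith : (0:ℝ) ≤ v - u) hlb
          calc (u - v) ^ 2 = (v - u) * (v - u) := by ring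
            _ ≤ (4 * Real.exp (2 * Rmax) * (sigmoid v - sigmoid u)) *
                (4 * Real.exp (2 * Rmax) * (sigmoid v - sigmoid u)) := hsq
            _ = 16 * (Real.exp (2 * Rmax) * Real.exp (2 * Rmax)) *
                (sigmoid u - sigmoid v) ^ 2 := by ring
            _ = 16 * Real.exp (4 * Rmax) * (sigmoid u - sigmoid v) ^ 2 := by rw [hexp4]
      have hstep2 : (sigmoid u - sigmoid v) ^ 2
          ≤ 4 * (Real.sqrt (sigmoid u) - Real.sqrt (sigmoid v)) ^ 2 :=
        sq_diff_le_sq_sqrt_diff _ _ (le_of_lt (sigmoid_pos u)) (sigmoid_le_one u)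
          (le_of_lt (sigmoid_pos v)) (sigmoid_le_one v)
      calc (u - v) ^ 2 ≤ 16 * Real.exp (4 * Rmax) * (sigmoid u - sigmoid v) ^ 2 := hstep1
        _ ≤ 16 * Real.exp (4 * Rmax) *
            (4 * (Real.sqrt (sigmoid u) - Real.sqrt (sigmoid v)) ^ 2) :=
          mul_le_mul_of_nonneg_left hstep2 (by positivity)
        _ = 64 * Real.exp (4 * Rmax) *
            (Real.sqrt (sigmoid u) - Real.sqrt (sigmoid v)) ^ 2 := by ring
    -- base-weighted sum of squared differences vs Hellinger
    have hbs : ∀ s : X × A × A,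
        (2 * ρ s.1 * pref s.1 s.2.1 * pref s.1 s.2.2) *
          (Real.sqrt (sigmoid (Faux pref β γ Rmax phat s)) -
            Real.sqrt (sigmoid (Faux pref β γ Rmax pβγ s))) ^ 2
        = (Real.sqrt (w s) - Real.sqrt (Qaux ρ pref β γ Rmax phat s)) ^ 2 := by
      intro s
      rw [hwQ s]
      show _ * _ = (Real.sqrt (2 * ρ s.1 * pref s.1 s.2.1 * pref s.1 s.2.2 *
          sigmoid (Faux pref β γ Rmax pβγ s))
        - Real.sqrt (2 * ρ s.1 * pref s.1 s.2.1 * pref s.1 s.2.2 *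
          sigmoid (Faux pref β γ Rmax phat s))) ^ 2
      rw [Real.sqrt_mul (le_of_lt (hbpos s)), Real.sqrt_mul (le_of_lt (hbpos s)),
        ← mul_sub]
      rw [mul_pow, Real.sq_sqrt (le_of_lt (hbpos s))]
      ring
    have hsum : ∑ s : X × A × A,
        (2 * ρ s.1 * pref s.1 s.2.1 * pref s.1 s.2.2) *
          (Faux pref β γ Rmax phat s - Faux pref β γ Rmax pβγ s) ^ 2
        ≤ 64 * Real.exp (4 * Rmax) * (2 - 2 * c phat) := by
      calc ∑ s : X × A × A,
          (2 * ρ s.1 * pref s.1 s.2.1 * pref s.1 s.2.2) *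
            (Faux pref β γ Rmax phat s - Faux pref β γ Rmax pβγ s) ^ 2
          ≤ ∑ s : X × A × A,
            (2 * ρ s.1 * pref s.1 s.2.1 * pref s.1 s.2.2) *
              (64 * Real.exp (4 * Rmax) *
                (Real.sqrt (sigmoid (Faux pref β γ Rmax phat s)) -
                  Real.sqrt (sigmoid (Faux pref β γ Rmax pβγ s))) ^ 2) :=
            Finset.sum_le_sum fun s _ =>
              mul_le_mul_of_nonneg_left (hkey s) (le_of_lt (hbpos s))
        _ = 64 * Real.exp (4 * Rmax) * ∑ s : X × A × A,
              (Real.sqrt (w s) - Real.sqrt (Qaux ρ pref β γ Rmax phat s)) ^ 2 := by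
            rw [Finset.mul_sum]
            refine Finset.sum_congr rfl fun s _ => ?_
            rw [← hbs s]
            ring
        _ = 64 * Real.exp (4 * Rmax) * (2 - 2 * c phat) := by rw [hH]
    -- identify the statistical error with the base-weighted sum
    have hFphat : ∀ (x : X) (a b : A), Faux pref β γ Rmax phat (x, a, b)
        = clip (2 * Rmax) (β * phiGamma γ (phat x a / pref x a)
            - β * phiGamma γ (phat x b / pref x b)) := fun _ _ _ => rfl
    have hTeq : ∑ s : X × A × A,
        (2 * ρ s.1 * pref s.1 s.2.1 * pref s.1 s.2.2) *
          (Faux pref β γ Rmax phat s - Faux pref β γ Rmax pβγ s) ^ 2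
        = 2 * ∑ x, ρ x * ∑ a, ∑ b, pref x a * pref x b *
            (clip (2 * Rmax)
                (β * phiGamma γ (phat x a / pref x a)
                  - β * phiGamma γ (phat x b / pref x b)) -
              clip (2 * Rmax) (rstar x a - rstar x b)) ^ 2 := by
      simp only [Fintype.sum_prod_type, Finset.mul_sum]
      refine Finset.sum_congr rfl fun x _ => Finset.sum_congr rfl fun a _ =>
        Finset.sum_congr rfl fun b _ => ?_
      rw [hFphat x a b, hFstar x a b]
      ring
    rw [hTeq] at hsum
    rw [← hNdef, mul_div_assoc, ← hεdef]
    have hS1 : ∑ x, ρ x * ∑ a, ∑ b, pref x a * pref x b *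
        (clip (2 * Rmax)
            (β * phiGamma γ (phat x a / pref x a)
              - β * phiGamma γ (phat x b / pref x b)) -
          clip (2 * Rmax) (rstar x a - rstar x b)) ^ 2
        ≤ 64 * Real.exp (4 * Rmax) * ε := by
      have h22 : 2 - 2 * c phat ≤ 2 * ε := by linarith [hcε]
      have h23 : 64 * Real.exp (4 * Rmax) * (2 - 2 * c phat)
          ≤ 64 * Real.exp (4 * Rmax) * (2 * ε) :=
        mul_le_mul_of_nonneg_left h22 (by positivity)
      linarith [hsum, h23]
    have hRmax2 : (1:ℝ) ≤ Rmax ^ 2 := by nlinarith [hRmax]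
    have hfin : 64 * Real.exp (4 * Rmax) * ε ≤ 128 * Rmax ^ 2 * (Real.exp (4 * Rmax) * ε) := by
      have h1 : (64:ℝ) ≤ 128 * Rmax ^ 2 := by linarith [hRmax2]
      calc 64 * Real.exp (4 * Rmax) * ε = 64 * (Real.exp (4 * Rmax) * ε) := by ring
        _ ≤ 128 * Rmax ^ 2 * (Real.exp (4 * Rmax) * ε) :=
          mul_le_mul_of_nonneg_right h1
            (mul_nonneg (le_of_lt (Real.exp_pos (4 * Rmax))) hεnn)
    calc ∑ x, ρ x * ∑ a, ∑ b, pref x a * pref x b *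
          (clip (2 * Rmax)
              (β * phiGamma γ (phat x a / pref x a)
                - β * phiGamma γ (phat x b / pref x b)) -
            clip (2 * Rmax) (rstar x a - rstar x b)) ^ 2
        ≤ 64 * Real.exp (4 * Rmax) * ε := hS1
      _ ≤ 128 * Rmax ^ 2 * (Real.exp (4 * Rmax) * ε) := hfin
      _ = 128 * Rmax ^ 2 * Real.exp (4 * Rmax) * ε := by ring
  refine le_trans hA (Finset.sum_le_sum fun D _ => ?_)
  by_cases hE : Egood D
  · rw [if_pos hE, if_pos (hCore D hE)]
  · rw [if_neg hE]
    split_ifs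
    · exact hWnn D
    · exact le_refl 0
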